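/- Assume Hypothesis (*). Then the adjacency design D(Γ) has no repeated blocks (distinct blocks have distinct point-sets) and is resolvable with exactly r parallel classes, the parallel classes being the N-orbits on B'. Moreover there are integers k ≥ 2 and ℓ ≥ 2 such that D(Γ) has kℓ points, every block is incident with exactly k points, and every point is incident with exactly r blocks (so D(Γ) is a 1-(kℓ, k, r) design). -/

import Mathlib

open SimpleGraph

section Prelude

variable {V : Type*}

/-- `g` is an automorphism of the graph `Γ`. -/
def IsGraphAut (Γ : SimpleGraph V) (g : Equiv.Perm V) : Prop :=
  ∀ u v : V, Γ.Adj (g u) (g v) ↔ Γ.Adj u v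

/-- `(B | Bᶜ)` is an (ordered) bipartition of `Γ`: every edge joins `B` and `Bᶜ`. -/
def IsBipartition (Γ : SimpleGraph V) (B : Set V) : Prop :=
  ∀ u v : V, Γ.Adj u v → (u ∈ B ↔ v ∉ B)

/-- The orbit of `x` under a subgroup `N` of permutations of `V`. -/
def POrbit (N : Subgroup (Equiv.Perm V)) (x : V) : Set V :=
  {y | ∃ n ∈ N, n x = y}

/-- `Γ` is locally `(G,s)`-distance transitive: the diameter is at least `s` and for
every vertex `v` and every `1 ≤ i ≤ s` the stabiliser of `v` in `G` is transitive on
the set of vertices at distance `i` from `v`. -/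
def LocallyDistTrans (Γ : SimpleGraph V) (G : Subgroup (Equiv.Perm V)) (s : ℕ) : Prop :=
  s ≤ Γ.diam ∧
    ∀ (v x y : V) (i : ℕ), 1 ≤ i → i ≤ s → Γ.dist v x = i → Γ.dist v y = i →
      ∃ g ∈ G, g v = v ∧ g x = y

/-- `Γ`, bipartite with ordered bipartition `(B | Bᶜ)`, is `r`-starlike relative to `N`:
`N` leaves `B` invariant, is transitive on `B`, and has exactly `r` orbits on `Bᶜ`. -/
def IsStarlike (Γ : SimpleGraph V) (B : Set V) (N : Subgroup (Equiv.Perm V)) (r : ℕ) : Prop :=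
  (∀ n ∈ N, ∀ v : V, n v ∈ B ↔ v ∈ B) ∧
    (∀ x ∈ B, ∀ y ∈ B, ∃ n ∈ N, n x = y) ∧
    {S : Set V | ∃ x ∈ Bᶜ, S = POrbit N x}.ncard = r

/-- `G` is transitive on the set `S` of (ordered) pairs. -/
def PairTrans (G : Subgroup (Equiv.Perm V)) (S : Set (V × V)) : Prop :=
  ∀ p ∈ S, ∀ q ∈ S, ∃ g ∈ G, g p.1 = q.1 ∧ g p.2 = q.2

/-- The adjacency design of the bipartite graph `Γ` with ordered bipartition `(B | Bᶜ)`
(points `B`, blocks `Bᶜ`, incidence = adjacency) is `G`-pairwise transitive. -/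
def AdjPT (Γ : SimpleGraph V) (B : Set V) (G : Subgroup (Equiv.Perm V)) : Prop :=
  (∀ g ∈ G, ∀ v : V, g v ∈ B ↔ v ∈ B) ∧
  PairTrans G {p | p.1 ∈ B ∧ p.2 ∈ Bᶜ ∧ Γ.Adj p.1 p.2} ∧
  PairTrans G {p | p.1 ∈ B ∧ p.2 ∈ Bᶜ ∧ ¬ Γ.Adj p.1 p.2} ∧
  PairTrans G {p | p.1 ∈ B ∧ p.2 ∈ B ∧ p.1 ≠ p.2 ∧ ∃ b ∈ Bᶜ, Γ.Adj p.1 b ∧ Γ.Adj p.2 b} ∧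
  PairTrans G {p | p.1 ∈ B ∧ p.2 ∈ B ∧ p.1 ≠ p.2 ∧ ¬ ∃ b ∈ Bᶜ, Γ.Adj p.1 b ∧ Γ.Adj p.2 b} ∧
  PairTrans G {p | p.1 ∈ Bᶜ ∧ p.2 ∈ Bᶜ ∧ p.1 ≠ p.2 ∧ ∃ x ∈ B, Γ.Adj x p.1 ∧ Γ.Adj x p.2} ∧
  PairTrans G {p | p.1 ∈ Bᶜ ∧ p.2 ∈ Bᶜ ∧ p.1 ≠ p.2 ∧ ¬ ∃ x ∈ B, Γ.Adj x p.1 ∧ Γ.Adj x p.2}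

/-- The adjacency design of `Γ` (points `B`, blocks `Bᶜ`) is `N`-nicely affine:
`N` acts as automorphisms preserving the biparts, transitively on points, and there is a
constant `μ` such that distinct blocks in different `N`-orbits have exactly `μ` common
points, while distinct blocks in the same `N`-orbit have no common point. -/
def AdjNA (Γ : SimpleGraph V) (B : Set V) (N : Subgroup (Equiv.Perm V)) : Prop :=
  (∀ n ∈ N, ∀ v : V, n v ∈ B ↔ v ∈ B) ∧
  (∀ x ∈ B, ∀ y ∈ B, ∃ n ∈ N, n x = y) ∧
  ∃ μ : ℕ, ∀ b ∈ Bᶜ, ∀ b' ∈ Bᶜ, b ≠ b' →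
    ((b' ∈ POrbit N b → ¬ ∃ x, Γ.Adj x b ∧ Γ.Adj x b') ∧
     (b' ∉ POrbit N b → {x | Γ.Adj x b ∧ Γ.Adj x b'}.ncard = μ))

/-- The adjacency design of `Γ` (points `B`, blocks `Bᶜ`) is affine: the blocks can be
partitioned into parallel classes, and there is a positive constant `μ` such that blocks
in distinct parallel classes have exactly `μ` common points. -/
def AdjAffine (Γ : SimpleGraph V) (B : Set V) : Prop :=
  ∃ 𝓒 : Set (Set V), (∀ C ∈ 𝓒, C ⊆ Bᶜ) ∧ (∀ b ∈ Bᶜ, ∃! C, C ∈ 𝓒 ∧ b ∈ C) ∧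
    (∀ C ∈ 𝓒, ∀ x ∈ B, ∃! b, b ∈ C ∧ Γ.Adj x b) ∧
    ∃ μ : ℕ, 0 < μ ∧ ∀ C ∈ 𝓒, ∀ C' ∈ 𝓒, C ≠ C' → ∀ b ∈ C, ∀ b' ∈ C',
      {x | Γ.Adj x b ∧ Γ.Adj x b'}.ncard = μ

end Prelude

section DesignPrelude

variable {P L : Type*}

/-- The design `(P, L, I)` is `G`-pairwise transitive. -/
def DesignPT (I : P → L → Prop) (G : Type*) [Group G] [MulAction G P] [MulAction G L] :
    Prop :=
  (∀ (x : P) (b : L) (x' : P) (b' : L), I x b → I x' b' →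
      ∃ g : G, g • x = x' ∧ g • b = b') ∧
  (∀ (x : P) (b : L) (x' : P) (b' : L), ¬ I x b → ¬ I x' b' →
      ∃ g : G, g • x = x' ∧ g • b = b') ∧
  (∀ x y x' y' : P, x ≠ y → x' ≠ y' → (∃ b, I x b ∧ I y b) → (∃ b, I x' b ∧ I y' b) →
      ∃ g : G, g • x = x' ∧ g • y = y') ∧
  (∀ x y x' y' : P, x ≠ y → x' ≠ y' → ¬ (∃ b, I x b ∧ I y b) → ¬ (∃ b, I x' b ∧ I y' b) →
      ∃ g : G, g • x = x' ∧ g • y = y') ∧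
  (∀ b c b' c' : L, b ≠ c → b' ≠ c' → (∃ x, I x b ∧ I x c) → (∃ x, I x b' ∧ I x c') →
      ∃ g : G, g • b = b' ∧ g • c = c') ∧
  (∀ b c b' c' : L, b ≠ c → b' ≠ c' → ¬ (∃ x, I x b ∧ I x c) → ¬ (∃ x, I x b' ∧ I x c') →
      ∃ g : G, g • b = b' ∧ g • c = c')

/-- The design `(P, L, I)` is `N`-nicely affine for the subgroup `N` of `G`. -/
def DesignNA (I : P → L → Prop) (G : Type*) [Group G] [MulAction G P] [MulAction G L]
    (N : Subgroup G) : Prop :=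
  (∀ x y : P, ∃ n ∈ N, n • x = y) ∧
  ∃ μ : ℕ, ∀ b b' : L, b ≠ b' →
    (((∃ n ∈ N, n • b = b') → ¬ ∃ x, I x b ∧ I x b') ∧
     ((¬ ∃ n ∈ N, n • b = b') → {x | I x b ∧ I x b'}.ncard = μ))

/-- The incidence graph of the design `(P, L, I)`. -/
def DIncGraph (I : P → L → Prop) : SimpleGraph (P ⊕ L) :=
  SimpleGraph.fromRel (fun a b => ∃ x s, a = Sum.inl x ∧ b = Sum.inr s ∧ I x s)

end DesignPrelude

section SetDesign

variable {V : Type*}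

/-- Pairwise transitivity for a design whose points are the elements of `V`, whose
blocks are the members of `𝓑` (identified with their point-sets) and whose
incidence relation is membership; `G` is a group of permutations of `V`. -/
def SetPT (𝓑 : Set (Set V)) (G : Subgroup (Equiv.Perm V)) : Prop :=
  (∀ x : V, ∀ s ∈ 𝓑, ∀ x' : V, ∀ s' ∈ 𝓑, x ∈ s → x' ∈ s' →
      ∃ g ∈ G, g x = x' ∧ (fun z => g z) '' s = s') ∧
  (∀ x : V, ∀ s ∈ 𝓑, ∀ x' : V, ∀ s' ∈ 𝓑, x ∉ s → x' ∉ s' →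
      ∃ g ∈ G, g x = x' ∧ (fun z => g z) '' s = s') ∧
  (∀ x y x' y' : V, x ≠ y → x' ≠ y' → (∃ s ∈ 𝓑, x ∈ s ∧ y ∈ s) → (∃ s ∈ 𝓑, x' ∈ s ∧ y' ∈ s) →
      ∃ g ∈ G, g x = x' ∧ g y = y') ∧
  (∀ x y x' y' : V, x ≠ y → x' ≠ y' → ¬ (∃ s ∈ 𝓑, x ∈ s ∧ y ∈ s) → ¬ (∃ s ∈ 𝓑, x' ∈ s ∧ y' ∈ s) →
      ∃ g ∈ G, g x = x' ∧ g y = y') ∧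
  (∀ s ∈ 𝓑, ∀ t ∈ 𝓑, ∀ s' ∈ 𝓑, ∀ t' ∈ 𝓑, s ≠ t → s' ≠ t' →
      (s ∩ t).Nonempty → (s' ∩ t').Nonempty →
      ∃ g ∈ G, (fun z => g z) '' s = s' ∧ (fun z => g z) '' t = t') ∧
  (∀ s ∈ 𝓑, ∀ t ∈ 𝓑, ∀ s' ∈ 𝓑, ∀ t' ∈ 𝓑, s ≠ t → s' ≠ t' →
      s ∩ t = ∅ → s' ∩ t' = ∅ →
      ∃ g ∈ G, (fun z => g z) '' s = s' ∧ (fun z => g z) '' t = t')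

/-- Nice affineness for a design with point set `V`, blocks `𝓑` (point-sets) and
incidence given by membership, relative to a permutation group `N`. -/
def SetNA (𝓑 : Set (Set V)) (N : Subgroup (Equiv.Perm V)) : Prop :=
  (∀ x y : V, ∃ n ∈ N, n x = y) ∧
  (∀ n ∈ N, ∀ s ∈ 𝓑, (fun z => n z) '' s ∈ 𝓑) ∧
  ∃ μ : ℕ, ∀ s ∈ 𝓑, ∀ s' ∈ 𝓑, s ≠ s' →
    (((∃ n ∈ N, (fun z => n z) '' s = s') → s ∩ s' = ∅) ∧
     ((¬ ∃ n ∈ N, (fun z => n z) '' s = s') → (s ∩ s').ncard = μ))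

end SetDesign

section QuotientGraph

variable {V : Type*}

/-- The setoid on vertices whose classes are the `N`-orbits. -/
def orbitSetoid (N : Subgroup (Equiv.Perm V)) : Setoid V where
  r x y := ∃ n ∈ N, n x = y
  iseqv := by
    refine ⟨fun x => ⟨1, N.one_mem, rfl⟩, ?_, ?_⟩
    · rintro x y ⟨n, hn, rfl⟩
      exact ⟨n⁻¹, N.inv_mem hn, by simp⟩
    · rintro x y z ⟨n, hn, rfl⟩ ⟨m, hm, rfl⟩
      exact ⟨m * n, N.mul_mem hm hn, rfl⟩

/-- The normal quotient graph `Γ_N`: vertices are the `N`-orbits, two distinct orbits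
being adjacent iff some vertex of one is adjacent to some vertex of the other. -/
def quotGraph (Γ : SimpleGraph V) (N : Subgroup (Equiv.Perm V)) :
    SimpleGraph (Quotient (orbitSetoid N)) :=
  SimpleGraph.fromRel (fun a b => ∃ x y : V, Γ.Adj x y ∧
    Quotient.mk (orbitSetoid N) x = a ∧ Quotient.mk (orbitSetoid N) y = b)

end QuotientGraph

section Subdivision

variable {W : Type*}

/-- The subdivision graph `S(Σ)` of a graph `Σ`: vertices are `EΣ ⊕ VΣ`, an edge
being adjacent to its endpoints. -/
def SubdivisionGraph (Sg : SimpleGraph W) : SimpleGraph (↥Sg.edgeSet ⊕ W) :=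
  SimpleGraph.fromRel (fun a b => ∃ (e : Sg.edgeSet) (w : W),
    a = Sum.inl e ∧ b = Sum.inr w ∧ w ∈ (e : Sym2 W))

/-- The graph on `B'` in which two vertices are adjacent iff they are at distance `2`
in `Γ`. -/
def distTwoGraph (Γ : SimpleGraph W) (B' : Set W) : SimpleGraph ↥B' where
  Adj a b := Γ.dist ↑a ↑b = 2
  symm := by
    refine ⟨?_⟩
    intro a b h
    rwa [SimpleGraph.dist_comm]
  loopless := by
    refine ⟨?_⟩
    intro a h
    simp [SimpleGraph.dist_self] at h

/-- `f 0, f 1, …, f t` is a `t`-arc of `Sg`. -/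
def IsArcOf (Sg : SimpleGraph W) (t : ℕ) (f : ℕ → W) : Prop :=
  (∀ i : ℕ, i < t → Sg.Adj (f i) (f (i + 1))) ∧
  (∀ i : ℕ, 1 ≤ i → i + 1 ≤ t → f (i - 1) ≠ f (i + 1))

end Subdivision

/-!
The group `G` is transitive on blocks and every block stabiliser is transitive on the blocks
at distance `2`, so a `G`-equivariant coincidence `f b = f b'` for one pair of blocks at
distance `2` holds for every such pair, and then for all pairs of blocks, since any two blocks
are linked by a chain of blocks at distance `2`. Applied to neighbourhoods this excludes
repeated blocks (otherwise `Γ` would be complete bipartite); applied to `N`-orbits it shows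
that two blocks of one `N`-orbit never meet (otherwise there would be a single `N`-orbit,
while `r ≥ 2`). As `N` is transitive on points, every `N`-orbit of blocks is then a parallel
class, and counting incidences gives the parameters of the design.
-/

section StarQuotient

variable {V : Type*} {Γ : SimpleGraph V}

namespace IsGraphAut

variable {g : Equiv.Perm V}

lemma inv (hg : IsGraphAut Γ g) : IsGraphAut Γ g⁻¹ := fun u v => by
  simpa using (hg (g⁻¹ u) (g⁻¹ v)).symm

lemma dist_apply_le (hconn : Γ.Connected) (hg : IsGraphAut Γ g) (u v : V) :
    Γ.dist (g u) (g v) ≤ Γ.dist u v := by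
  obtain ⟨p, hp⟩ := hconn.exists_walk_length_eq_dist u v
  calc Γ.dist (g u) (g v) ≤ (p.map ⟨g, (hg _ _).mpr⟩).length := dist_le _
    _ = Γ.dist u v := by rw [Walk.length_map, hp]

lemma dist_apply (hconn : Γ.Connected) (hg : IsGraphAut Γ g) (u v : V) :
    Γ.dist (g u) (g v) = Γ.dist u v :=
  (hg.dist_apply_le hconn u v).antisymm <| by
    simpa using hg.inv.dist_apply_le hconn (g u) (g v)

lemma neighborSet_apply (hg : IsGraphAut Γ g) (v : V) :
    Γ.neighborSet (g v) = g '' Γ.neighborSet v := by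
  ext y
  refine ⟨fun h => ⟨g⁻¹ y, (hg _ _).mp (by simpa using h), by simp⟩, ?_⟩
  rintro ⟨z, hz, rfl⟩
  exact (hg _ _).mpr hz

lemma ncard_neighborSet_apply (hg : IsGraphAut Γ g) (v : V) :
    (Γ.neighborSet (g v)).ncard = (Γ.neighborSet v).ncard := by
  rw [hg.neighborSet_apply, Set.ncard_image_of_injective _ g.injective]

end IsGraphAut

section POrbit

variable {N : Subgroup (Equiv.Perm V)}

lemma mem_pOrbit_self (N : Subgroup (Equiv.Perm V)) (x : V) : x ∈ POrbit N x :=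
  ⟨1, N.one_mem, rfl⟩

lemma pOrbit_eq_of_mem {x y : V} (h : y ∈ POrbit N x) : POrbit N y = POrbit N x := by
  obtain ⟨n, hn, rfl⟩ := h
  ext z
  constructor
  · rintro ⟨m, hm, rfl⟩
    exact ⟨m * n, N.mul_mem hm hn, rfl⟩
  · rintro ⟨m, hm, rfl⟩
    exact ⟨m * n⁻¹, N.mul_mem hm (N.inv_mem hn), by simp⟩

lemma pOrbit_apply {G : Subgroup (Equiv.Perm V)} (hnorm : ∀ g ∈ G, ∀ n ∈ N, g * n * g⁻¹ ∈ N)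
    {g : Equiv.Perm V} (hg : g ∈ G) (x : V) : POrbit N (g x) = g '' POrbit N x := by
  ext z
  constructor
  · rintro ⟨n, hn, rfl⟩
    refine ⟨(g⁻¹ * n * g) x, ⟨g⁻¹ * n * g, ?_, rfl⟩, by simp⟩
    simpa using hnorm g⁻¹ (G.inv_mem hg) n hn
  · rintro ⟨w, ⟨n, hn, rfl⟩, rfl⟩
    exact ⟨g * n * g⁻¹, hnorm g hg n hn, by simp⟩

lemma pOrbit_subset_compl {B : Set V} (hNB : ∀ n ∈ N, ∀ v : V, n v ∈ B ↔ v ∈ B) {b : V}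
    (hb : b ∈ Bᶜ) : POrbit N b ⊆ Bᶜ := by
  rintro _ ⟨n, hn, rfl⟩
  exact fun h => hb ((hNB n hn b).mp h)

end POrbit

def IsParallelClass (Γ : SimpleGraph V) (B C : Set V) : Prop :=
  C ⊆ Bᶜ ∧ ∀ x ∈ B, ∃! y, y ∈ C ∧ Γ.Adj x y

namespace IsBipartition

variable {B : Set V}

lemma mem_compl_of_adj (hbip : IsBipartition Γ B) {u v : V} (h : Γ.Adj u v) (hu : u ∈ B) :
    v ∈ Bᶜ :=
  (hbip u v h).mp hu

lemma mem_of_adj_of_mem_compl (hbip : IsBipartition Γ B) {u v : V} (h : Γ.Adj u v)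
    (hu : u ∈ Bᶜ) : v ∈ B := by
  by_contra hv
  exact hu ((hbip u v h).mpr hv)

lemma dist_eq_two (hconn : Γ.Connected) (hbip : IsBipartition Γ B) {b b' x : V}
    (hb : b ∈ Bᶜ) (hb' : b' ∈ Bᶜ) (hne : b ≠ b') (hxb : Γ.Adj x b) (hxb' : Γ.Adj x b') :
    Γ.dist b b' = 2 := by
  have hnadj : ¬ Γ.Adj b b' := fun h => hb' (hbip.mem_of_adj_of_mem_compl h hb)
  have : Γ.edist b b' = 2 := edist_eq_two_iff.mpr ⟨hne, hnadj, x, hxb.symm, hxb'.symm⟩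
  exact_mod_cast (hconn b b').coe_dist_eq_edist.trans this

lemma eq_of_dist_eq_two {α : Type*} {f : V → α} (hconn : Γ.Connected)
    (hbip : IsBipartition Γ B) (hf : ∀ c ∈ Bᶜ, ∀ c' ∈ Bᶜ, Γ.dist c c' = 2 → f c = f c')
    {b b' : V} (hb : b ∈ Bᶜ) (hb' : b' ∈ Bᶜ) : f b = f b' := by
  suffices ∀ u (p : Γ.Walk u b'),
      (u ∈ Bᶜ → f u = f b') ∧ (u ∈ B → ∀ c, Γ.Adj u c → f c = f b') from
    (this b (hconn b b').some).1 hb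
  intro u p
  induction p with
  | nil => exact ⟨fun _ => rfl, fun hu => absurd hu hb'⟩
  | @cons u w _ huw _ ih =>
    specialize ih hb'
    refine ⟨fun hu => ih.2 (hbip.mem_of_adj_of_mem_compl huw hu) u huw.symm, fun hu c huc => ?_⟩
    have hw := hbip.mem_compl_of_adj huw hu
    obtain rfl | hcw := eq_or_ne c w
    · exact ih.1 hw
    · have hc := hbip.mem_compl_of_adj huc hu
      exact (hf c hc w hw (hbip.dist_eq_two hconn hc hw hcw huc huw)).trans (ih.1 hw)

lemma subsingleton_of_subsingleton_neighborSet (hconn : Γ.Connected) (hbip : IsBipartition Γ B)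
    (hsub : ∀ b ∈ Bᶜ, (Γ.neighborSet b).Subsingleton) : B.Subsingleton := by
  intro x hx x' hx'
  suffices ∀ u v (_ : Γ.Walk u v), (u = x ∨ Γ.Adj x u) → (v = x ∨ Γ.Adj x v) by
    obtain h | h := this x x' (hconn x x').some (.inl rfl)
    · exact h.symm
    · exact absurd hx' (hbip.mem_compl_of_adj h hx)
  intro u v p
  induction p with
  | nil => exact id
  | @cons u w _ huw _ ih =>
    intro hu
    apply ih
    rcases hu with rfl | hxu
    · exact .inr huw
    · exact .inl (hsub u (hbip.mem_compl_of_adj hxu hx) huw hxu.symm)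

lemma one_lt_of_ncard_neighborSet_eq [Finite V] (hconn : Γ.Connected)
    (hbip : IsBipartition Γ B) (hB : 1 < B.ncard) {k : ℕ}
    (hval : ∀ b ∈ Bᶜ, (Γ.neighborSet b).ncard = k) : 1 < k := by
  by_contra! hk
  refine (Set.one_lt_ncard_iff_nontrivial.1 hB).not_subsingleton
    (hbip.subsingleton_of_subsingleton_neighborSet hconn fun b hb => ?_)
  exact Set.ncard_le_one_iff_subsingleton.1 (hval b hb ▸ hk)

lemma forall_adj_of_neighborSet_eq (hbip : IsBipartition Γ B)
    (hadj : ∀ v : V, ∃ w, Γ.Adj v w)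
    (hnbhd : ∀ c ∈ Bᶜ, ∀ c' ∈ Bᶜ, Γ.neighborSet c = Γ.neighborSet c') :
    ∀ x ∈ B, ∀ y ∈ Bᶜ, Γ.Adj x y := by
  intro x hx y hy
  obtain ⟨c, hxc⟩ := hadj x
  have : x ∈ Γ.neighborSet c := hxc.symm
  rw [hnbhd c (hbip.mem_compl_of_adj hxc hx) y hy] at this
  exact this.symm

end IsBipartition

namespace IsParallelClass

variable {B C : Set V}

lemma ncard_eq_mul [Finite V] (hbip : IsBipartition Γ B) (hC : IsParallelClass Γ B C) {k : ℕ}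
    (hk : ∀ c ∈ C, (Γ.neighborSet c).ncard = k) : B.ncard = k * C.ncard := by
  have hB : B = ⋃ c ∈ C, Γ.neighborSet c := by
    ext x
    simp only [Set.mem_iUnion, mem_neighborSet, exists_prop]
    refine ⟨fun hx => ?_, fun ⟨c, hc, hcx⟩ => hbip.mem_of_adj_of_mem_compl hcx (hC.1 hc)⟩
    obtain ⟨c, ⟨hc, hxc⟩, -⟩ := hC.2 x hx
    exact ⟨c, hc, hxc.symm⟩
  have hdisj : C.PairwiseDisjoint Γ.neighborSet := by
    intro c hc c' hc' hne
    refine Set.disjoint_left.2 fun x hxc hxc' => hne ?_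
    exact (hC.2 x (hbip.mem_of_adj_of_mem_compl hxc (hC.1 hc))).unique
      ⟨hc, hxc.symm⟩ ⟨hc', hxc'.symm⟩
  rw [hB, C.toFinite.ncard_biUnion (fun _ _ => Set.toFinite _) hdisj, finsum_mem_congr rfl hk,
    finsum_mem_eq_finite_toFinset_sum _ C.toFinite, Finset.sum_const, smul_eq_mul,
    ← Set.ncard_eq_toFinset_card _ C.toFinite, mul_comm]

lemma two_le_ncard [Finite V] (hbip : IsBipartition Γ B) (hC : IsParallelClass Γ B C) {k : ℕ}
    (hval : ∀ b ∈ Bᶜ, (Γ.neighborSet b).ncard = k)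
    (hncb : ¬ ∀ x ∈ B, ∀ y ∈ Bᶜ, Γ.Adj x y) {y : V} (hy : y ∈ C) : 2 ≤ C.ncard := by
  by_contra! hlt
  have hCy : C = {y} := (Set.ncard_le_one_iff_subsingleton.1 (by omega)).eq_singleton_of_mem hy
  have hyB : Γ.neighborSet y = B := by
    ext x
    refine ⟨fun hyx => hbip.mem_of_adj_of_mem_compl hyx (hC.1 hy), fun hx => ?_⟩
    obtain ⟨z, ⟨hz, hxz⟩, -⟩ := hC.2 x hx
    rw [hCy, Set.mem_singleton_iff] at hz
    exact (hz ▸ hxz).symm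
  refine hncb fun x hx b hb => ?_
  have hbB : Γ.neighborSet b = B :=
    Set.eq_of_subset_of_ncard_le (fun z hz => hbip.mem_of_adj_of_mem_compl hz hb)
      (by rw [← hyB, hval b hb, hval y (hC.1 hy)])
  exact (show x ∈ Γ.neighborSet b from hbB ▸ hx).symm

end IsParallelClass

lemma ncard_neighborSet_eq_ncard_pOrbits {N : Subgroup (Equiv.Perm V)} {B : Set V}
    (hbip : IsBipartition Γ B) (hpar : ∀ b ∈ Bᶜ, IsParallelClass Γ B (POrbit N b))
    {x : V} (hx : x ∈ B) :
    (Γ.neighborSet x).ncard = {S : Set V | ∃ y ∈ Bᶜ, S = POrbit N y}.ncard := by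
  have hinj : Set.InjOn (POrbit N) (Γ.neighborSet x) := by
    intro y hy y' hy' hyy'
    refine ((hpar y (hbip.mem_compl_of_adj hy hx)).2 x hx).unique ⟨mem_pOrbit_self N y, hy⟩
      ⟨?_, hy'⟩
    rw [hyy']
    exact mem_pOrbit_self N y'
  rw [← hinj.ncard_image]
  congr 1
  ext S
  constructor
  · rintro ⟨y, hy, rfl⟩
    exact ⟨y, hbip.mem_compl_of_adj hy hx, rfl⟩
  · rintro ⟨z, hz, rfl⟩
    obtain ⟨y, ⟨hyz, hxy⟩, -⟩ := (hpar z hz).2 x hx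
    exact ⟨y, hxy, pOrbit_eq_of_mem hyz⟩

namespace LocallyDistTrans

variable {G : Subgroup (Equiv.Perm V)} {s : ℕ} {B : Set V}

lemma transitive_compl [Nontrivial V] (hconn : Γ.Connected) (hbip : IsBipartition Γ B)
    (hldt : LocallyDistTrans Γ G s) (hs : 1 ≤ s) (hGaut : ∀ g ∈ G, IsGraphAut Γ g)
    (hB : ∀ x ∈ B, ∀ y ∈ B, ∃ g ∈ G, g x = y) : ∀ b ∈ Bᶜ, ∀ b' ∈ Bᶜ, ∃ g ∈ G, g b = b' := by
  intro b hb b' hb'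
  obtain ⟨x, hbx⟩ := hconn.preconnected.exists_adj_of_nontrivial b
  obtain ⟨x', hbx'⟩ := hconn.preconnected.exists_adj_of_nontrivial b'
  obtain ⟨g, hg, hgx⟩ := hB x (hbip.mem_of_adj_of_mem_compl hbx hb) x'
    (hbip.mem_of_adj_of_mem_compl hbx' hb')
  have hgb : Γ.dist x' (g b) = 1 := by
    rw [← hgx, dist_eq_one_iff_adj, hGaut g hg]
    exact hbx.symm
  obtain ⟨h, hh, -, hhb⟩ := hldt.2 x' (g b) b' 1 le_rfl hs hgb (dist_eq_one_iff_adj.2 hbx'.symm)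
  exact ⟨h * g, G.mul_mem hh hg, hhb⟩

lemma eq_of_dist_eq_two (hconn : Γ.Connected) (hldt : LocallyDistTrans Γ G s) (hs : 2 ≤ s)
    (hGaut : ∀ g ∈ G, IsGraphAut Γ g) {S : Set V} (htrans : ∀ c ∈ S, ∀ c' ∈ S, ∃ g ∈ G, g c = c')
    {f : V → Set V} (hf : ∀ g ∈ G, ∀ u, f (g u) = g '' f u) {b b' : V} (hb : b ∈ S)
    (hbb' : Γ.dist b b' = 2) (hfbb' : f b = f b') {c c' : V} (hc : c ∈ S)
    (hcc' : Γ.dist c c' = 2) : f c = f c' := by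
  obtain ⟨h, hh, rfl⟩ := htrans b hb c hc
  have hd : Γ.dist b (h⁻¹ c') = 2 := by
    rw [← (hGaut h hh).dist_apply hconn, Equiv.Perm.coe_inv, Equiv.apply_symm_apply]
    exact hcc'
  obtain ⟨g, hg, hgb, hgb'⟩ := hldt.2 b b' (h⁻¹ c') 2 one_le_two hs hbb' hd
  calc f (h b) = h '' (g '' f b) := by rw [hf h hh, ← hf g hg, hgb]
    _ = h '' (g '' f b') := by rw [hfbb']
    _ = f c' := by rw [← hf g hg, hgb', ← hf h hh, Equiv.Perm.coe_inv, Equiv.apply_symm_apply]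

lemma forall_eq_of_dist_eq_two (hconn : Γ.Connected) (hbip : IsBipartition Γ B)
    (hldt : LocallyDistTrans Γ G s) (hs : 2 ≤ s) (hGaut : ∀ g ∈ G, IsGraphAut Γ g)
    (htrans : ∀ c ∈ Bᶜ, ∀ c' ∈ Bᶜ, ∃ g ∈ G, g c = c') {f : V → Set V}
    (hf : ∀ g ∈ G, ∀ u, f (g u) = g '' f u) {b b' : V} (hb : b ∈ Bᶜ)
    (hbb' : Γ.dist b b' = 2) (hfbb' : f b = f b') : ∀ c ∈ Bᶜ, ∀ c' ∈ Bᶜ, f c = f c' :=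
  fun _ hc _ hc' => hbip.eq_of_dist_eq_two hconn
    (fun _ hc _ _ hcc' => hldt.eq_of_dist_eq_two hconn hs hGaut htrans hf hb hbb' hfbb' hc hcc')
    hc hc'

lemma injOn_neighborSet [Nontrivial V] (hconn : Γ.Connected) (hbip : IsBipartition Γ B)
    (hldt : LocallyDistTrans Γ G s) (hs : 2 ≤ s) (hGaut : ∀ g ∈ G, IsGraphAut Γ g)
    (htrans : ∀ c ∈ Bᶜ, ∀ c' ∈ Bᶜ, ∃ g ∈ G, g c = c')
    (hncb : ¬ ∀ x ∈ B, ∀ y ∈ Bᶜ, Γ.Adj x y) : Set.InjOn Γ.neighborSet Bᶜ := by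
  intro b hb b' hb' hbb'
  by_contra hne
  obtain ⟨x, hbx⟩ := hconn.preconnected.exists_adj_of_nontrivial b
  have hb'x : Γ.Adj b' x := by
    rw [← mem_neighborSet, ← hbb']
    exact hbx
  have hdist := hbip.dist_eq_two hconn hb hb' hne hbx.symm hb'x.symm
  exact hncb (hbip.forall_adj_of_neighborSet_eq hconn.preconnected.exists_adj_of_nontrivial
    (hldt.forall_eq_of_dist_eq_two hconn hbip hs hGaut htrans
      (fun g hg => (hGaut g hg).neighborSet_apply) hb hdist hbb'))

lemma isParallelClass_pOrbit [Nontrivial V] {N : Subgroup (Equiv.Perm V)}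
    (hconn : Γ.Connected) (hbip : IsBipartition Γ B) (hldt : LocallyDistTrans Γ G s)
    (hs : 2 ≤ s) (hGaut : ∀ g ∈ G, IsGraphAut Γ g) (hNG : N ≤ G)
    (hnorm : ∀ g ∈ G, ∀ n ∈ N, g * n * g⁻¹ ∈ N) (hNB : ∀ n ∈ N, ∀ v : V, n v ∈ B ↔ v ∈ B)
    (hNtrans : ∀ x ∈ B, ∀ y ∈ B, ∃ n ∈ N, n x = y)
    (htrans : ∀ c ∈ Bᶜ, ∀ c' ∈ Bᶜ, ∃ g ∈ G, g c = c')
    (horb : {S : Set V | ∃ x ∈ Bᶜ, S = POrbit N x}.ncard ≠ 1) {b : V} (hb : b ∈ Bᶜ) :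
    IsParallelClass Γ B (POrbit N b) := by
  refine ⟨pOrbit_subset_compl hNB hb, fun x hx => ?_⟩
  obtain ⟨v, hbv⟩ := hconn.preconnected.exists_adj_of_nontrivial b
  obtain ⟨n, hn, rfl⟩ := hNtrans v (hbip.mem_of_adj_of_mem_compl hbv hb) x hx
  have hnb : Γ.Adj (n v) (n b) := (hGaut n (hNG hn) _ _).2 hbv.symm
  refine ⟨n b, ⟨⟨n, hn, rfl⟩, hnb⟩, ?_⟩
  rintro y ⟨hy, hny⟩
  by_contra hne
  have hdist := hbip.dist_eq_two hconn (hbip.mem_compl_of_adj hnb hx)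
    (hbip.mem_compl_of_adj hny hx) (Ne.symm hne) hnb hny
  have hall := hldt.forall_eq_of_dist_eq_two hconn hbip hs hGaut htrans
    (fun g hg => pOrbit_apply hnorm hg) (hbip.mem_compl_of_adj hnb hx) hdist
    (by rw [pOrbit_eq_of_mem hy, pOrbit_eq_of_mem ⟨n, hn, rfl⟩])
  refine horb ?_
  rw [← Set.ncard_singleton (POrbit N b)]
  congr 1
  ext S
  exact ⟨fun ⟨c, hc, hS⟩ => hS.trans (hall c hc b hb), fun hS => ⟨b, hb, hS⟩⟩

end LocallyDistTrans

end StarQuotient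

theorem statement12_general {V : Type*} [Fintype V] (Γ : SimpleGraph V) (B : Set V)
    (hconn : Γ.Connected) (hbip : IsBipartition Γ B)
    (hncb : ¬ ∀ x ∈ B, ∀ y ∈ Bᶜ, Γ.Adj x y)
    (G N : Subgroup (Equiv.Perm V)) (hGaut : ∀ g ∈ G, IsGraphAut Γ g)
    (hNG : N ≤ G) (hnorm : ∀ g ∈ G, ∀ n ∈ N, g * n * g⁻¹ ∈ N)
    (r s : ℕ) (hr : 2 ≤ r) (hs : 2 ≤ s)
    (hstar : IsStarlike Γ B N r) (hldt : LocallyDistTrans Γ G s) :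
    -- no repeated blocks
    (∀ b ∈ Bᶜ, ∀ b' ∈ Bᶜ, Γ.neighborSet b = Γ.neighborSet b' → b = b') ∧
    -- each N-orbit on Bᶜ is a parallel class …
    (∀ b ∈ Bᶜ, ∀ x ∈ B, ∃! y : V, y ∈ POrbit N b ∧ Γ.Adj x y) ∧
    -- … and there are exactly r of them
    ({S : Set V | ∃ x ∈ Bᶜ, S = POrbit N x}.ncard = r) ∧
    -- D(Γ) is a 1-(kℓ, k, r) design
    (∃ k ℓ : ℕ, 2 ≤ k ∧ 2 ≤ ℓ ∧ B.ncard = k * ℓ ∧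
      (∀ b ∈ Bᶜ, (Γ.neighborSet b).ncard = k) ∧
      (∀ x ∈ B, (Γ.neighborSet x).ncard = r)) := by
  obtain ⟨hNB, hNtrans, horb⟩ := hstar
  obtain ⟨x₀, hx₀, y₀, hy₀, -⟩ : ∃ x ∈ B, ∃ y ∈ Bᶜ, ¬ Γ.Adj x y := by simpa using hncb
  have : Nontrivial V := ⟨⟨x₀, y₀, fun h => hy₀ (h ▸ hx₀)⟩⟩
  have htrans := hldt.transitive_compl hconn hbip (by omega) hGaut fun x hx y hy =>
    (hNtrans x hx y hy).imp fun n hn => ⟨hNG hn.1, hn.2⟩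
  have hpar : ∀ b ∈ Bᶜ, IsParallelClass Γ B (POrbit N b) := fun b hb =>
    hldt.isParallelClass_pOrbit hconn hbip hs hGaut hNG hnorm hNB hNtrans htrans (by omega) hb
  set k := (Γ.neighborSet y₀).ncard
  have hval : ∀ b ∈ Bᶜ, (Γ.neighborSet b).ncard = k := fun b hb => by
    obtain ⟨g, hg, rfl⟩ := htrans y₀ hy₀ b hb
    exact (hGaut g hg).ncard_neighborSet_apply y₀
  have hBkℓ := (hpar y₀ hy₀).ncard_eq_mul hbip fun c hc => hval c ((hpar y₀ hy₀).1 hc)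
  have hℓ := (hpar y₀ hy₀).two_le_ncard hbip hval hncb (mem_pOrbit_self N y₀)
  have hk : 1 < k := by
    have hk₀ : 0 < k := (Set.ncard_pos).2 (hconn.preconnected.exists_adj_of_nontrivial y₀)
    refine hbip.one_lt_of_ncard_neighborSet_eq hconn ?_ hval
    rw [hBkℓ]
    exact hℓ.trans (Nat.le_mul_of_pos_left _ hk₀)
  exact ⟨fun b hb b' hb' => hldt.injOn_neighborSet hconn hbip hs hGaut htrans hncb hb hb',
    fun b hb => (hpar b hb).2, horb, k, _, hk, hℓ, hBkℓ, hval,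
    fun x hx => horb ▸ ncard_neighborSet_eq_ncard_pOrbits hbip hpar hx⟩

/-- **Proposition `star quotient`**.  Under Hypothesis (*), the adjacency design `D(Γ)`
has no repeated blocks and is resolvable with exactly `r` parallel classes, namely the
`N`-orbits on `Bᶜ`; moreover there are `k, ℓ ≥ 2` with `|B| = kℓ`, every block incident
with exactly `k` points and every point incident with exactly `r` blocks (so `D(Γ)` is a
`1-(kℓ, k, r)` design). -/
theorem statement12 {V : Type*} [Fintype V] (Γ : SimpleGraph V) (B : Set V)
    (hconn : Γ.Connected) (hbip : IsBipartition Γ B)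
    (hncb : ¬ ∀ x ∈ B, ∀ y ∈ Bᶜ, Γ.Adj x y)
    (G N : Subgroup (Equiv.Perm V)) (hGaut : ∀ g ∈ G, IsGraphAut Γ g)
    (hNG : N ≤ G) (hN1 : N ≠ ⊥) (hnorm : ∀ g ∈ G, ∀ n ∈ N, g * n * g⁻¹ ∈ N)
    (r s : ℕ) (hr : 2 ≤ r) (hs : 2 ≤ s)
    (hstar : IsStarlike Γ B N r) (hldt : LocallyDistTrans Γ G s) :
    -- no repeated blocks
    (∀ b ∈ Bᶜ, ∀ b' ∈ Bᶜ, Γ.neighborSet b = Γ.neighborSet b' → b = b') ∧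
    -- each N-orbit on Bᶜ is a parallel class …
    (∀ b ∈ Bᶜ, ∀ x ∈ B, ∃! y : V, y ∈ POrbit N b ∧ Γ.Adj x y) ∧
    -- … and there are exactly r of them
    ({S : Set V | ∃ x ∈ Bᶜ, S = POrbit N x}.ncard = r) ∧
    -- D(Γ) is a 1-(kℓ, k, r) design
    (∃ k ℓ : ℕ, 2 ≤ k ∧ 2 ≤ ℓ ∧ B.ncard = k * ℓ ∧
      (∀ b ∈ Bᶜ, (Γ.neighborSet b).ncard = k) ∧
      (∀ x ∈ B, (Γ.neighborSet x).ncard = r)) :=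
  statement12_general Γ B hconn hbip hncb G N hGaut hNG hnorm r s hr hs hstar hldt
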